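/- arXiv:1910.06941 — 6 statements merged into one kernel-verified Lean document; each statement's English description precedes it below -/
import Mathlib

section
/- Let G and H be groups, let X be a totally symmetric subset of G, and let ρ : G → H be a group homomorphism. Then the image ρ(X) is a totally symmetric subset of H, and moreover either ρ is injective on X or ρ(X) has at most one element. In particular, if X is finite then ρ(X) has cardinality either |X| or at most 1. -/
/-- A subset `X` of a group `G` is totally symmetric if its elements commute
pairwise and every permutation of `X` is achieved by conjugation by a single
element of `G`. -/
def IsTotallySymmetric {G : Type*} [Group G] (X : Set G) : Prop :=
  (∀ x ∈ X, ∀ y ∈ X, Commute x y) ∧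
  ∀ τ : X ≃ X, ∃ g : G, ∀ x : X, g * (x : G) * g⁻¹ = (τ x : G)

/-- The image of a totally symmetric set under a homomorphism is totally
symmetric, and the homomorphism is either injective on it or collapses it to at
most one element; in particular, for finite `X` the image has cardinality `|X|`
or at most `1`. -/
theorem stmt6 {G H : Type*} [Group G] [Group H] (X : Set G)
    (hX : IsTotallySymmetric X) (ρ : G →* H) :
    IsTotallySymmetric (ρ '' X) ∧
    (Set.InjOn ρ X ∨ (ρ '' X).Subsingleton) ∧
    (X.Finite → (ρ '' X).ncard = X.ncard ∨ (ρ '' X).ncard ≤ 1) := by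
  classical
  obtain ⟨hcomm, hperm⟩ := hX
  -- dichotomy
  have hdich : Set.InjOn ρ X ∨ (ρ '' X).Subsingleton := by
    by_cases hinj : Set.InjOn ρ X
    · exact Or.inl hinj
    · right
      rw [Set.InjOn] at hinj
      push_neg at hinj
      obtain ⟨x, hx, y, hy, hxy, hne⟩ := hinj
      rintro _ ⟨a, ha, rfl⟩ _ ⟨b, hb, rfl⟩
      by_cases hab : a = b
      · rw [hab]
      · -- construct a permutation of X sending x ↦ a, y ↦ b
        set xX : X := ⟨x, hx⟩
        set yX : X := ⟨y, hy⟩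
        set aX : X := ⟨a, ha⟩
        set bX : X := ⟨b, hb⟩
        have hxyX : xX ≠ yX := fun h => hne (congrArg Subtype.val h)
        have habX : aX ≠ bX := fun h => hab (congrArg Subtype.val h)
        set s1 : Equiv.Perm X := Equiv.swap xX aX with hs1
        have h1 : aX ≠ s1 yX := by
          intro h
          apply hxyX
          have := congrArg s1 h
          rw [Equiv.swap_apply_self] at this
          rw [hs1] at this
          rw [Equiv.swap_apply_right] at this
          exact this
        set σ : Equiv.Perm X := s1.trans (Equiv.swap (s1 yX) bX) with hσ
        have hσx : σ xX = aX := by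
          rw [hσ]
          simp only [Equiv.trans_apply]
          rw [hs1, Equiv.swap_apply_left, ← hs1]
          exact Equiv.swap_apply_of_ne_of_ne h1 habX
        have hσy : σ yX = bX := by
          rw [hσ]
          simp only [Equiv.trans_apply]
          exact Equiv.swap_apply_left _ _
        obtain ⟨g, hg⟩ := hperm σ
        have hgx := hg xX
        have hgy := hg yX
        rw [hσx] at hgx
        rw [hσy] at hgy
        have : ρ a = ρ (g * x * g⁻¹) := by rw [hgx]
        have hb' : ρ b = ρ (g * y * g⁻¹) := by rw [hgy]
        simp only [map_mul, map_inv] at this hb'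
        rw [this, hb', hxy]
  refine ⟨⟨?_, ?_⟩, hdich, ?_⟩
  · rintro _ ⟨a, ha, rfl⟩ _ ⟨b, hb, rfl⟩
    exact (hcomm a ha b hb).map ρ
  · intro τ
    rcases hdich with hinj | hsub
    · -- injective case: transport the permutation
      set e : X ≃ (ρ '' X : Set H) := Equiv.Set.imageOfInjOn ρ X hinj with he
      have hecoe : ∀ s : X, (e s : H) = ρ s := fun s => rfl
      set τ' : X ≃ X := e.trans (τ.trans e.symm) with hτ'
      obtain ⟨g, hg⟩ := hperm τ'
      refine ⟨ρ g, ?_⟩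
      intro y
      have hy := hg (e.symm y)
      have h1 : ρ (g * (e.symm y : G) * g⁻¹) = ρ (τ' (e.symm y) : G) := by rw [hy]
      simp only [map_mul, map_inv] at h1
      have h2 : (ρ ((e.symm y : G)) : H) = (y : H) := by
        rw [← hecoe, Equiv.apply_symm_apply]
      have h3 : (ρ (τ' (e.symm y) : G) : H) = (τ y : H) := by
        rw [← hecoe, hτ']
        simp
      rw [h2] at h1
      rw [h1, h3]
    · -- subsingleton case: τ is the identity
      have : Subsingleton (ρ '' X : Set H) := hsub.coe_sort
      refine ⟨1, fun x => ?_⟩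
      have : τ x = x := Subsingleton.elim _ _
      rw [this]
      group
  · intro hfin
    rcases hdich with hinj | hsub
    · exact Or.inl (Set.ncard_image_of_injOn hinj)
    · right
      rcases hsub.eq_empty_or_singleton with h | ⟨a, h⟩ <;> simp [h]
end

section
/- Let X = {x_1, …, x_m} be a finite totally symmetric subset of a group G with m distinct elements, and let k, ℓ ∈ ℤ. For each i let x_i^* denote the product of the x_j with j ≠ i (well-defined since the elements of X commute). Then the set X^{k,ℓ} = {x_1^k (x_1^*)^ℓ, …, x_m^k (x_m^*)^ℓ} is a totally symmetric subset of G. -/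
private lemma multiset_noncommProd_hcongr {β : Type*} [Monoid β] {s t : Multiset β}
    (h : s = t) (cs : {x | x ∈ s}.Pairwise Commute) (ct : {x | x ∈ t}.Pairwise Commute) :
    s.noncommProd cs = t.noncommProd ct := by subst h; rfl

private lemma noncommProd_eq_of_map_eq {α α' β : Type*} [Monoid β] {s : Finset α}
    {s' : Finset α'} {f : α → β} {f' : α' → β}
    (h : s.1.map f = s'.1.map f') (c) (c') :
    s.noncommProd f c = s'.noncommProd f' c' :=
  multiset_noncommProd_hcongr h _ _

private lemma erase_reindex {G : Type*} [Monoid G] {m : ℕ} (x : Fin m → G)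
    (σ : Equiv.Perm (Fin m)) (i : Fin m) (c1) (c2) :
    (Finset.univ.erase i).noncommProd (fun j => x (σ j)) c1
      = (Finset.univ.erase (σ i)).noncommProd x c2 := by
  apply noncommProd_eq_of_map_eq
  have hset : (Finset.univ.erase i).map σ.toEmbedding = Finset.univ.erase (σ i) := by
    ext a
    simp only [Finset.mem_map, Finset.mem_erase, Finset.mem_univ, and_true,
      Equiv.coe_toEmbedding]
    constructor
    · rintro ⟨b, hb, rfl⟩
      exact fun h => hb (σ.injective h)
    · intro h
      exact ⟨σ.symm a, fun hh => h (by rw [← hh, Equiv.apply_symm_apply]),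
        σ.apply_symm_apply a⟩
  calc (Finset.univ.erase i).1.map (fun j => x (σ j))
      = ((Finset.univ.erase i).1.map σ).map x := by rw [Multiset.map_map]; rfl
    _ = ((Finset.univ.erase i).map σ.toEmbedding).1.map x := by rw [Finset.map_val]; rfl
    _ = (Finset.univ.erase (σ i)).1.map x := by rw [hset]

/-- If `X = {x_1, …, x_m}` is a finite totally symmetric set with `m` distinct
elements and `k, ℓ ∈ ℤ`, then `X^{k,ℓ} = {x_i^k (x_i^*)^ℓ}` is totally
symmetric, where `x_i^*` is the product of the `x_j` with `j ≠ i`. -/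
theorem stmt7 {G : Type*} [Group G] {m : ℕ} (x : Fin m → G)
    (hinj : Function.Injective x)
    (hX : IsTotallySymmetric (Set.range x)) (k l : ℤ) :
    IsTotallySymmetric (Set.range fun i : Fin m =>
      x i ^ k * ((Finset.univ.erase i).noncommProd x
        (fun a _ b _ _ => hX.1 (x a) ⟨a, rfl⟩ (x b) ⟨b, rfl⟩)) ^ l) := by
  classical
  have C : ∀ a b : Fin m, Commute (x a) (x b) := fun a b =>
    hX.1 (x a) ⟨a, rfl⟩ (x b) ⟨b, rfl⟩
  set p : Fin m → G := fun i => (Finset.univ.erase i).noncommProd x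
    (fun a _ b _ _ => hX.1 (x a) ⟨a, rfl⟩ (x b) ⟨b, rfl⟩) with hp
  set y : Fin m → G := fun i => x i ^ k * p i ^ l with hy
  have cxp : ∀ a b, Commute (x a) (p b) := fun a b =>
    Finset.noncommProd_commute _ _ _ _ fun c _ => C a c
  have cpp : ∀ a b, Commute (p a) (p b) := fun a b =>
    Finset.noncommProd_commute _ _ _ _ fun c _ => (cxp c a).symm
  have cyy : ∀ a b, Commute (y a) (y b) := fun a b =>
    (((C a b).zpow_zpow k k).mul_right ((cxp a b).zpow_zpow k l)).mul_left
      ((((cxp b a).symm).zpow_zpow l k).mul_right ((cpp a b).zpow_zpow l l))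
  -- any permutation of indices is realized by conjugation on x
  have perm_to_g : ∀ σ : Equiv.Perm (Fin m), ∃ g : G, ∀ j, g * x j * g⁻¹ = x (σ j) := by
    intro σ
    set ex : Fin m ≃ Set.range x := Equiv.ofInjective x hinj with hex
    obtain ⟨g, hg⟩ := hX.2 ((ex.symm.trans σ).trans ex)
    refine ⟨g, fun j => ?_⟩
    have := hg (ex j)
    simpa [hex, Equiv.ofInjective_apply] using this
  -- conjugation realizing a permutation on x also permutes the y's
  have key : ∀ (σ : Equiv.Perm (Fin m)) (g : G), (∀ j, g * x j * g⁻¹ = x (σ j)) →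
      ∀ i, g * y i * g⁻¹ = y (σ i) := by
    intro σ g hg i
    have hφ : ∀ z : G, (MulAut.conj g) z = g * z * g⁻¹ := fun z => rfl
    have hgp : g * p i * g⁻¹ = p (σ i) := by
      have e1 : (MulAut.conj g) (p i)
          = (Finset.univ.erase i).noncommProd (fun j => x (σ j))
            (fun a _ b _ _ => C (σ a) (σ b)) := by
        exact (Finset.map_noncommProd _ _ _ (MulAut.conj g)).trans
          (Finset.noncommProd_congr rfl (fun j _ => (hφ (x j)).trans (hg j)) _)
      rw [← hφ, e1]
      exact erase_reindex x σ i _ _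
    have hgx : g * x i ^ k * g⁻¹ = x (σ i) ^ k := by
      rw [← hφ, map_zpow, hφ, hg]
    have hgpl : g * p i ^ l * g⁻¹ = p (σ i) ^ l := by
      rw [← hφ, map_zpow, hφ, hgp]
    calc g * y i * g⁻¹ = (g * x i ^ k * g⁻¹) * (g * p i ^ l * g⁻¹) := by
          simp [hy, mul_assoc]
      _ = y (σ i) := by rw [hgx, hgpl]
  constructor
  · rintro _ ⟨i, rfl⟩ _ ⟨j, rfl⟩
    exact cyy i j
  · intro τ
    by_cases hyinj : Function.Injective y
    · set ey : Fin m ≃ Set.range y := Equiv.ofInjective y hyinj with hey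
      set σ : Equiv.Perm (Fin m) := (ey.trans τ).trans ey.symm with hσ
      obtain ⟨g, hg⟩ := perm_to_g σ
      refine ⟨g, ?_⟩
      rintro ⟨z, i, rfl⟩
      have h1 := key σ g hg i
      have h2 : (⟨y i, ⟨i, rfl⟩⟩ : Set.range y) = ey i := by
        simp [hey, Equiv.ofInjective_apply]
      have h3 : y (σ i) = (τ (ey i) : G) := by
        have : ey (σ i) = τ (ey i) := by
          simp [hσ]
        rw [← this]
        simp [hey, Equiv.ofInjective_apply]
      rw [h2]
      rw [← h3]
      exact h1
    · rw [Function.not_injective_iff] at hyinj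
      obtain ⟨i, j, hij, hne⟩ := hyinj
      have hsub : ∀ a b : Fin m, y a = y b := by
        intro a b
        by_cases hab : a = b
        · rw [hab]
        have hac : a ≠ Equiv.swap i a j := by
          intro h
          have h2 : Equiv.swap i a a = Equiv.swap i a (Equiv.swap i a j) :=
            congrArg _ h
          rw [Equiv.swap_apply_right, Equiv.swap_apply_self] at h2
          exact hne h2
        set σ : Equiv.Perm (Fin m) :=
          (Equiv.swap i a).trans (Equiv.swap (Equiv.swap i a j) b) with hσ
        have hσi : σ i = a := by
          simp only [hσ, Equiv.trans_apply, Equiv.swap_apply_left]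
          exact Equiv.swap_apply_of_ne_of_ne hac hab
        have hσj : σ j = b := by
          simp only [hσ, Equiv.trans_apply]
          exact Equiv.swap_apply_left _ _
        obtain ⟨g, hg⟩ := perm_to_g σ
        calc y a = y (σ i) := by rw [hσi]
          _ = g * y i * g⁻¹ := (key σ g hg i).symm
          _ = g * y j * g⁻¹ := by rw [hij]
          _ = y (σ j) := key σ g hg j
          _ = y b := by rw [hσj]
      have hss : Subsingleton (Set.range y) := by
        constructor
        rintro ⟨a, i', rfl⟩ ⟨b, j', rfl⟩
        exact Subtype.ext (hsub i' j')
      refine ⟨1, fun z => ?_⟩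
      have : τ z = z := Subsingleton.elim _ _
      rw [this]
      group
end

section
/- Let X = {x_1, …, x_m} be a finite totally symmetric subset of a group G with m ≥ 2 distinct elements. Then the set X' = {x_1 x_2⁻¹, x_1 x_3⁻¹, …, x_1 x_m⁻¹} is a totally symmetric subset of G. -/
theorem stmt8_aux {G : Type*} [Group G] {m : ℕ} (x : Fin m → G)
    (hinj : Function.Injective x)
    (hX : IsTotallySymmetric (Set.range x)) (z : Fin m) :
    IsTotallySymmetric ((fun j => x z * (x j)⁻¹) '' {j : Fin m | j ≠ z}) := by
  have hc : ∀ a b : Fin m, Commute (x a) (x b) := fun a b =>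
    hX.1 _ ⟨a, rfl⟩ _ ⟨b, rfl⟩
  constructor
  · rintro _ ⟨i, hi, rfl⟩ _ ⟨j, hj, rfl⟩
    have h1 : Commute (x z) (x z * (x j)⁻¹) :=
      (hc z z).mul_right (hc z j).inv_right
    have h2 : Commute (x i)⁻¹ (x z * (x j)⁻¹) :=
      ((hc i z).mul_right (hc i j).inv_right).inv_left
    exact h1.mul_left h2
  · intro τ
    have hbij : Function.Bijective
        (fun j : {j : Fin m // j ≠ z} =>
          (⟨x z * (x j)⁻¹, ⟨j, j.2, rfl⟩⟩ :
            ((fun j => x z * (x j)⁻¹) '' {j : Fin m | j ≠ z}))) := by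
      constructor
      · intro a b hab
        have h : x z * (x a)⁻¹ = x z * (x b)⁻¹ := congrArg Subtype.val hab
        exact Subtype.ext (hinj (inv_injective (mul_left_cancel h)))
      · rintro ⟨y, j, hj, rfl⟩
        exact ⟨⟨j, hj⟩, rfl⟩
    let e' : {j : Fin m // j ≠ z} ≃ ((fun j => x z * (x j)⁻¹) '' {j : Fin m | j ≠ z}) :=
      Equiv.ofBijective _ hbij
    let π : Equiv.Perm {j : Fin m // j ≠ z} := (e'.trans τ).trans e'.symm
    let σ : Equiv.Perm (Fin m) :=
      Equiv.Perm.subtypeCongr π (Equiv.refl {j : Fin m // ¬ j ≠ z})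
    have hσz : σ z = z := by
      have h : ¬ z ≠ z := by simp
      exact Equiv.Perm.subtypeCongr.right_apply π (Equiv.refl _) h
    have hσ : ∀ (j : Fin m) (h : j ≠ z), σ j = π ⟨j, h⟩ := fun j h =>
      Equiv.Perm.subtypeCongr.left_apply π (Equiv.refl _) h
    let e : Fin m ≃ Set.range x := Equiv.ofInjective x hinj
    obtain ⟨g, hg⟩ := hX.2 ((e.symm.trans σ).trans e)
    have hg' : ∀ j : Fin m, g * x j * g⁻¹ = x (σ j) := by
      intro j
      have := hg (e j)
      simpa [e] using this
    refine ⟨g, ?_⟩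
    intro y
    obtain ⟨j, rfl⟩ := hbij.2 y
    have hτ : τ ((fun j : {j : Fin m // j ≠ z} =>
          (⟨x z * (x j)⁻¹, ⟨j, j.2, rfl⟩⟩ :
            ((fun j => x z * (x j)⁻¹) '' {j : Fin m | j ≠ z}))) j) = e' (π j) := by
      show τ (e' j) = e' (π j)
      simp [π]
    rw [hτ]
    have hco : (e' (π j) : G) = x z * (x (π j))⁻¹ := rfl
    rw [hco]
    show g * (x z * (x j)⁻¹) * g⁻¹ = _
    have key : g * (x z * (x j)⁻¹) * g⁻¹
        = (g * x z * g⁻¹) * (g * (x j)⁻¹ * g⁻¹) := by group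
    rw [key]
    have h2 : g * (x j : G)⁻¹ * g⁻¹ = (x (σ j))⁻¹ := by
      rw [← hg' j]; group
    rw [hg' z, hσz, h2, hσ j j.2]

/-- If `X = {x_1, …, x_m}` is a finite totally symmetric set with `m ≥ 2`
distinct elements, then `X' = {x_1 x_2⁻¹, …, x_1 x_m⁻¹}` is totally symmetric. -/
theorem stmt8 {G : Type*} [Group G] {m : ℕ} (hm : 2 ≤ m) (x : Fin m → G)
    (hinj : Function.Injective x)
    (hX : IsTotallySymmetric (Set.range x)) :
    IsTotallySymmetric
      ((fun j => x ⟨0, by omega⟩ * (x j)⁻¹) '' {j : Fin m | j ≠ ⟨0, by omega⟩}) := by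
  exact stmt8_aux x hinj hX ⟨0, by omega⟩
end

section
/- Let n ≥ 2 and let N = ⌊n/2⌋. The set X_n = {σ_1, σ_3, σ_5, …, σ_{2N-1}} of odd-indexed standard generators of the braid group B_n is totally symmetric with respect to the commutator subgroup B_n': its elements commute pairwise, and every permutation of X_n is achieved by conjugation by an element of B_n'. -/
/-- The braid relations on generators indexed by `Fin (n-1)` (generator `i`
represents the standard generator `σ_{i+1}`). -/
def braidRels (n : ℕ) : Set (FreeGroup (Fin (n - 1))) :=
  {r | (∃ i j : Fin (n - 1), (i : ℕ) + 1 = (j : ℕ) ∧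
        r = FreeGroup.of i * FreeGroup.of j * FreeGroup.of i *
            (FreeGroup.of j * FreeGroup.of i * FreeGroup.of j)⁻¹) ∨
      (∃ i j : Fin (n - 1), (i : ℕ) + 2 ≤ (j : ℕ) ∧
        r = FreeGroup.of i * FreeGroup.of j * (FreeGroup.of j * FreeGroup.of i)⁻¹)}

/-- The braid group on `n` strands. -/
abbrev BraidGroup (n : ℕ) : Type := PresentedGroup (braidRels n)

/-- The standard generator `σ_{i+1}` of the braid group `B_n`. -/
def σ {n : ℕ} (i : Fin (n - 1)) : BraidGroup n := PresentedGroup.of i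
/-- A subset `X` of a group `G` is totally symmetric with respect to a subgroup
`H` if its elements commute pairwise and every permutation of `X` is achieved by
conjugation by a single element of `H`. -/
def IsTotallySymmetricWrt {G : Type*} [Group G] (X : Set G) (H : Subgroup G) : Prop :=
  (∀ x ∈ X, ∀ y ∈ X, Commute x y) ∧
  ∀ τ : X ≃ X, ∃ g ∈ H, ∀ x : X, g * (x : G) * g⁻¹ = (τ x : G)

lemma swap_swap_commute {α : Type*} [DecidableEq α] {a b c d : α}
    (h1 : a ≠ c) (h2 : a ≠ d) (h3 : b ≠ c) (h4 : b ≠ d) :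
    Equiv.swap a b * Equiv.swap c d = Equiv.swap c d * Equiv.swap a b := by
  ext x
  simp only [Equiv.Perm.mul_apply, Equiv.swap_apply_def]
  split_ifs <;> simp_all

lemma swap_braid {α : Type*} [DecidableEq α] {x y z : α}
    (hxy : x ≠ y) (hyz : y ≠ z) (hxz : x ≠ z) :
    Equiv.swap x y * Equiv.swap y z * Equiv.swap x y
      = Equiv.swap y z * Equiv.swap x y * Equiv.swap y z := by
  have L : Equiv.swap y x * Equiv.swap z y * Equiv.swap y x = Equiv.swap x z :=
    Equiv.swap_mul_swap_mul_swap (Ne.symm hyz) (Ne.symm hxz)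
  have R : Equiv.swap y z * Equiv.swap x y * Equiv.swap y z = Equiv.swap z x :=
    Equiv.swap_mul_swap_mul_swap hxy hxz
  rw [R, Equiv.swap_comm x y, Equiv.swap_comm y z, L, Equiv.swap_comm]

namespace BraidAux
variable {n : ℕ}

def permGen (n : ℕ) (i : Fin (n-1)) : Equiv.Perm (Fin n) :=
  Equiv.swap ⟨i.1, by have := i.2; omega⟩ ⟨i.1+1, by have := i.2; omega⟩

lemma permGen_rels : ∀ r ∈ braidRels n, FreeGroup.lift (permGen n) r = 1 := by
      rintro r (⟨i, j, hij, rfl⟩ | ⟨i, j, hij, rfl⟩) <;>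
        simp only [map_mul, map_inv, FreeGroup.lift_apply_of, mul_inv_eq_one, permGen]
      · have hj : (⟨(j:ℕ), by have := j.2; omega⟩ : Fin n) = ⟨i.1+1, by have := j.2; omega⟩ :=
          Fin.ext (by simp [← hij])
        have hj2 : (⟨(j:ℕ)+1, by have := j.2; omega⟩ : Fin n) = ⟨i.1+2, by have := j.2; omega⟩ :=
          Fin.ext (by simp [← hij])
        rw [hj, hj2]
        exact swap_braid (by simp [Fin.ext_iff]) (by simp [Fin.ext_iff]) (by simp [Fin.ext_iff])
      · apply swap_swap_commute <;> (simp only [ne_eq, Fin.mk.injEq]; omega)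

noncomputable def toPerm (n : ℕ) : BraidGroup n →* Equiv.Perm (Fin n) :=
  PresentedGroup.toGroup permGen_rels

lemma toPerm_sigma (i : Fin (n-1)) :
    toPerm n (σ i) = permGen n i :=
  PresentedGroup.toGroup.of _

lemma sigma_injective : Function.Injective (σ (n := n)) := by
  intro a b hab
  have h := congrArg (toPerm n) hab
  rw [toPerm_sigma, toPerm_sigma] at h
  unfold permGen at h
  have h2 := congrArg (fun p : Equiv.Perm (Fin n) => p ⟨a.1, by have := a.2; omega⟩) h
  simp only [Equiv.swap_apply_left, Equiv.swap_apply_def, Fin.ext_iff] at h2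
  split_ifs at h2 <;> refine Fin.ext ?_ <;> simp_all <;> omega


lemma mk_rel_eq_one {r : FreeGroup (Fin (n-1))} (hr : r ∈ braidRels n) :
    PresentedGroup.mk (braidRels n) r = 1 :=
  (QuotientGroup.eq_one_iff _).mpr (Subgroup.subset_normalClosure hr)

lemma braid_rel {i j : Fin (n-1)} (h : (i:ℕ)+1 = j) :
    σ i * σ j * σ i = σ j * σ i * σ j := by
  have h1 := mk_rel_eq_one (n := n) (Or.inl ⟨i, j, h, rfl⟩)
  simp only [map_mul, map_inv, mul_inv_eq_one] at h1
  exact h1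

lemma comm_rel {i j : Fin (n-1)} (h : (i:ℕ)+2 ≤ j) :
    σ i * σ j = σ j * σ i := by
  have h1 := mk_rel_eq_one (n := n) (Or.inr ⟨i, j, h, rfl⟩)
  simp only [map_mul, map_inv, mul_inv_eq_one] at h1
  exact h1

lemma sigma_commute {i j : Fin (n-1)} (h : (i:ℕ)+2 ≤ j ∨ (j:ℕ)+2 ≤ i ∨ i = j) :
    Commute (σ i) (σ j) := by
  rcases h with h | h | rfl
  · exact comm_rel h
  · exact (comm_rel h).symm
  · exact Commute.refl _

/-- the exponent-sum homomorphism -/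
lemma exp_rels : ∀ r ∈ braidRels n,
    FreeGroup.lift (fun _ : Fin (n-1) => Multiplicative.ofAdd (1:ℤ)) r = 1 := by
  rintro r (⟨i, j, hij, rfl⟩ | ⟨i, j, hij, rfl⟩) <;>
    simp only [map_mul, map_inv, FreeGroup.lift_apply_of, mul_inv_eq_one]

noncomputable def expHom (n : ℕ) : BraidGroup n →* Multiplicative ℤ :=
  PresentedGroup.toGroup exp_rels

lemma expHom_sigma (i : Fin (n-1)) : expHom n (σ i) = Multiplicative.ofAdd 1 :=
  PresentedGroup.toGroup.of _

lemma ab_sigma_eq (hn : 2 ≤ n) : ∀ (k : ℕ) (hk : k < n-1),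
    Abelianization.of (σ (⟨k, hk⟩ : Fin (n-1))) = Abelianization.of (σ ⟨0, by omega⟩)
  | 0, _ => rfl
  | k+1, hk => by
    have hb := braid_rel (n := n) (i := ⟨k, by omega⟩) (j := ⟨k+1, hk⟩) rfl
    have h2 := congrArg (Abelianization.of (G := BraidGroup n)) hb
    simp only [map_mul] at h2
    set x := Abelianization.of (σ (⟨k, by omega⟩ : Fin (n-1)))
    set y := Abelianization.of (σ (⟨k+1, hk⟩ : Fin (n-1)))
    have hxy : x = y := by
      rw [mul_assoc, mul_assoc, mul_comm x y] at h2
      exact mul_right_cancel h2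
    rw [← hxy]
    exact ab_sigma_eq hn k (by omega)

lemma mem_commutator_of_exp (hn : 2 ≤ n) {g : BraidGroup n}
    (h : expHom n g = 1) : g ∈ commutator (BraidGroup n) := by
  set s := Abelianization.of (σ (⟨0, by omega⟩ : Fin (n-1))) with hs
  have key : ∀ g : BraidGroup n,
      Abelianization.of g = s ^ (Multiplicative.toAdd (expHom n g)) := by
    intro g
    set H : Subgroup (BraidGroup n) :=
      { carrier := {g | Abelianization.of g = s ^ (Multiplicative.toAdd (expHom n g))}
        one_mem' := by simp
        mul_mem' := by
          intro a b ha hb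
          simp only [Set.mem_setOf_eq, map_mul] at *
          rw [ha, hb, ← zpow_add, toAdd_mul]
        inv_mem' := by
          intro a ha
          simp only [Set.mem_setOf_eq, map_inv] at *
          rw [ha, ← zpow_neg, toAdd_inv] } with hH
    refine PresentedGroup.generated_by _ H ?_ g
    intro j
    show Abelianization.of (σ j) = s ^ (Multiplicative.toAdd (expHom n (σ j)))
    rw [expHom_sigma, toAdd_ofAdd, zpow_one, hs, ← ab_sigma_eq hn j.1 j.2]
  have h1 : Abelianization.of g = 1 := by
    rw [key g, h]; simp
  exact (QuotientGroup.eq_one_iff g).mp h1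

/-- abstract conjugation computation -/
lemma conj_braid {G : Type*} [Group G] {a b c : G}
    (h1 : a*b*a = b*a*b) (h2 : b*c*b = c*b*c) (h3 : a*c = c*a) :
    (b*c*a*b) * a * (b*c*a*b)⁻¹ = c ∧ (b*c*a*b) * c * (b*c*a*b)⁻¹ = a := by
  have e1 : (b*c*a*b) * a = c * (b*c*a*b) := by
    calc b*c*a*b*a = b*c*(a*b*a) := by group
    _ = b*c*(b*a*b) := by rw [h1]
    _ = (b*c*b)*(a*b) := by group
    _ = (c*b*c)*(a*b) := by rw [h2]
    _ = c*(b*c*a*b) := by group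
  have e2 : (b*c*a*b) * c = a * (b*c*a*b) := by
    calc b*c*a*b*c = b*(c*a)*(b*c) := by group
    _ = b*(a*c)*(b*c) := by rw [h3]
    _ = b*a*(c*b*c) := by group
    _ = b*a*(b*c*b) := by rw [← h2]
    _ = (b*a*b)*(c*b) := by group
    _ = (a*b*a)*(c*b) := by rw [← h1]
    _ = a*b*(a*c)*b := by group
    _ = a*b*(c*a)*b := by rw [h3]
    _ = a*(b*c*a*b) := by group
  constructor
  · rw [e1]; group
  · rw [e2]; group


def xgen (n : ℕ) (i : Fin (n / 2)) : BraidGroup n :=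
  σ ⟨2 * i.1, by have := i.2; omega⟩

lemma xgen_eq_sigma {j : Fin (n/2)} {d : Fin (n-1)} (h : 2 * j.1 = d.1) :
    xgen n j = σ d := congrArg σ (Fin.ext h)

lemma xgen_commute (i j : Fin (n/2)) : Commute (xgen n i) (xgen n j) := by
  unfold xgen
  apply sigma_commute
  rcases lt_trichotomy i.1 j.1 with h | h | h
  · left; simp only; omega
  · right; right; exact Fin.ext (by simp [h])
  · right; left; simp only; omega

lemma xgen_injective : Function.Injective (xgen n) := by
  intro a b hab
  have h := congrArg Fin.val (sigma_injective hab)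
  simp only at h
  exact Fin.ext (by omega)

set_option maxHeartbeats 2000000 in
lemma adj_swap (n : ℕ) (i : ℕ) (hi : i + 1 < n/2) :
    ∃ g : BraidGroup n, ∀ j : Fin (n/2),
      g * xgen n j * g⁻¹ = xgen n (Equiv.swap ⟨i, by omega⟩ ⟨i+1, hi⟩ j) := by
  have hn1 : 2*i+2 < n - 1 := by omega
  set a : Fin (n-1) := ⟨2*i, by omega⟩ with ha
  set b : Fin (n-1) := ⟨2*i+1, by omega⟩ with hb
  set c : Fin (n-1) := ⟨2*i+2, by omega⟩ with hc
  have h1 : σ a * σ b * σ a = σ b * σ a * σ b := braid_rel rfl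
  have h2 : σ b * σ c * σ b = σ c * σ b * σ c := braid_rel rfl
  have h3 : σ a * σ c = σ c * σ a := comm_rel (by simp [ha, hc])
  obtain ⟨e1, e2⟩ := conj_braid h1 h2 h3
  refine ⟨σ b * σ c * σ a * σ b, ?_⟩
  intro j
  rcases eq_or_ne j.1 i with hj | hj
  · have hja : xgen n j = σ a := xgen_eq_sigma (by simp only [ha]; omega)
    have hsw : Equiv.swap (⟨i, by omega⟩ : Fin (n/2)) ⟨i+1, hi⟩ j = ⟨i+1, hi⟩ := by
      simp [Equiv.swap_apply_def, Fin.ext_iff, hj]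
    rw [hja, hsw, xgen_eq_sigma (j := ⟨i+1, hi⟩) (d := c) (by simp only [hc]; try omega)]
    exact e1
  · rcases eq_or_ne j.1 (i+1) with hj2 | hj2
    · have hjc : xgen n j = σ c := xgen_eq_sigma (by simp only [hc]; try omega)
      have hsw : Equiv.swap (⟨i, by omega⟩ : Fin (n/2)) ⟨i+1, hi⟩ j = ⟨i, by omega⟩ := by
        simp [Equiv.swap_apply_def, Fin.ext_iff, hj, hj2]
      rw [hjc, hsw, xgen_eq_sigma (j := ⟨i, by omega⟩) (d := a) (by simp only [ha]; try omega)]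
      exact e2
    · set d : Fin (n-1) := ⟨2*j.1, by have := j.2; omega⟩ with hd
      have hjd : xgen n j = σ d := xgen_eq_sigma (by simp only [hd]; try omega)
      have cda : Commute (σ d) (σ a) := sigma_commute (by
        simp only [hd, ha]; omega)
      have cdb : Commute (σ d) (σ b) := sigma_commute (by
        simp only [hd, hb]; omega)
      have cdc : Commute (σ d) (σ c) := sigma_commute (by
        simp only [hd, hc]; omega)
      have hcomm : Commute (σ b * σ c * σ a * σ b) (σ d) :=
        ((cdb.symm.mul_left cdc.symm).mul_left cda.symm).mul_left cdb.symm
      have hsw : Equiv.swap (⟨i, by omega⟩ : Fin (n/2)) ⟨i+1, hi⟩ j = j :=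
        Equiv.swap_apply_of_ne_of_ne (by simp [Fin.ext_iff, hj])
          (by simp [Fin.ext_iff, hj2])
      rw [hjd, hsw, hjd, hcomm.eq, mul_assoc, mul_inv_cancel, mul_one]


/-- the subgroup of permutations realizable by conjugation -/
def realizable (n : ℕ) : Subgroup (Equiv.Perm (Fin (n/2))) where
  carrier := {π | ∃ g : BraidGroup n, ∀ i, g * xgen n i * g⁻¹ = xgen n (π i)}
  one_mem' := ⟨1, by simp⟩
  mul_mem' := by
    rintro π ρ ⟨g, hg⟩ ⟨h, hh⟩
    refine ⟨g * h, fun i => ?_⟩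
    have h1 : (g*h) * xgen n i * (g*h)⁻¹ = g * (h * xgen n i * h⁻¹) * g⁻¹ := by group
    rw [h1, hh, hg]
    rfl
  inv_mem' := by
    rintro π ⟨g, hg⟩
    refine ⟨g⁻¹, fun i => ?_⟩
    have h1 := hg (π⁻¹ i)
    rw [show π (π⁻¹ i) = i from π.apply_symm_apply i] at h1
    rw [← h1]
    group

lemma swap_mem_realizable (n : ℕ) :
    ∀ (k a b : ℕ) (_ : a < b) (hb : b < n/2) (_ : b - a ≤ k),
      Equiv.swap (⟨a, by omega⟩ : Fin (n/2)) ⟨b, hb⟩ ∈ realizable n := by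
  intro k
  induction k with
  | zero => intro a b hab hb hk; omega
  | succ k ih =>
    intro a b hab hb hk
    rcases eq_or_lt_of_le (Nat.succ_le_of_lt hab) with h | h
    · -- adjacent
      obtain ⟨g, hg⟩ := adj_swap n a (by omega)
      have hb' : (⟨b, hb⟩ : Fin (n/2)) = ⟨a+1, by omega⟩ := Fin.ext (by show b = a + 1; omega)
      rw [hb']
      exact ⟨g, hg⟩
    · -- composite: swap a b = swap(a,a+1) * swap(a+1,b) * swap(a,a+1)
      have m1 : Equiv.swap (⟨a, by omega⟩ : Fin (n/2)) ⟨a+1, by omega⟩ ∈ realizable n :=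
        ih a (a+1) (by omega) (by omega) (by omega)
      have m2 : Equiv.swap (⟨a+1, by omega⟩ : Fin (n/2)) ⟨b, hb⟩ ∈ realizable n :=
        ih (a+1) b (by omega) hb (by omega)
      have key : Equiv.swap (⟨a, by omega⟩ : Fin (n/2)) ⟨b, hb⟩
          = Equiv.swap (⟨a, by omega⟩ : Fin (n/2)) ⟨a+1, by omega⟩
            * Equiv.swap (⟨a+1, by omega⟩ : Fin (n/2)) ⟨b, hb⟩
            * Equiv.swap (⟨a, by omega⟩ : Fin (n/2)) ⟨a+1, by omega⟩ := by
        rw [Equiv.swap_comm (⟨a, by omega⟩ : Fin (n/2)) ⟨a+1, by omega⟩,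
          Equiv.swap_comm (⟨a+1, by omega⟩ : Fin (n/2)) ⟨b, hb⟩,
          Equiv.swap_mul_swap_mul_swap (by simp [Fin.ext_iff]; omega)
            (by simp [Fin.ext_iff]; omega),
          Equiv.swap_comm]
      rw [key]
      exact Subgroup.mul_mem _ (Subgroup.mul_mem _ m1 m2) m1

lemma realizable_top (n : ℕ) (π : Equiv.Perm (Fin (n/2))) : π ∈ realizable n := by
  refine Equiv.Perm.swap_induction_on π (Subgroup.one_mem _) ?_
  intro f x y hxy hf
  refine Subgroup.mul_mem _ ?_ hf
  rcases Ne.lt_or_gt (fun h : x.1 = y.1 => hxy (Fin.ext h)) with h | h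
  · have hm := swap_mem_realizable n (n/2) x.1 y.1 h y.2 (by omega)
    have hx : (⟨x.1, by omega⟩ : Fin (n/2)) = x := Fin.ext rfl
    have hy : (⟨y.1, y.2⟩ : Fin (n/2)) = y := Fin.ext rfl
    rwa [hx, hy] at hm
  · have hm := swap_mem_realizable n (n/2) y.1 x.1 h x.2 (by omega)
    have hx : (⟨x.1, x.2⟩ : Fin (n/2)) = x := Fin.ext rfl
    have hy : (⟨y.1, by omega⟩ : Fin (n/2)) = y := Fin.ext rfl
    rw [hy, hx] at hm
    rwa [Equiv.swap_comm]

end BraidAux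

/-- For `n ≥ 2`, the set `X_n = {σ_1, σ_3, …, σ_{2⌊n/2⌋-1}}` of odd-indexed
generators of `B_n` is totally symmetric with respect to `B_n'`.  (Generator
`σ_{2i+1}` corresponds to the index `2i` in our `Fin (n-1)`-indexing.) -/
theorem stmt10 (n : ℕ) (hn : 2 ≤ n) :
    IsTotallySymmetricWrt
      (Set.range fun i : Fin (n / 2) =>
        σ (n := n) ⟨2 * i.1, by have := i.2; omega⟩)
      (commutator (BraidGroup n)) := by
  constructor
  · rintro x ⟨i, rfl⟩ y ⟨j, rfl⟩
    exact BraidAux.xgen_commute i j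
  · intro τ
    have hN : 0 < n / 2 := by omega
    have hinj : Function.Injective
        (fun i : Fin (n / 2) => σ (n := n) ⟨2 * i.1, by have := i.2; omega⟩) :=
      BraidAux.xgen_injective
    set E : Fin (n/2) ≃ (Set.range fun i : Fin (n / 2) =>
        σ (n := n) ⟨2 * i.1, by have := i.2; omega⟩) :=
      Equiv.ofInjective _ hinj with hE
    set π : Equiv.Perm (Fin (n/2)) := E.trans (τ.trans E.symm) with hπ
    obtain ⟨g, hg⟩ := BraidAux.realizable_top n π
    set N0 : Fin (n/2) := ⟨0, hN⟩ with hN0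
    set k : ℤ := Multiplicative.toAdd (BraidAux.expHom n g) with hk
    refine ⟨g * (BraidAux.xgen n N0) ^ (-k), ?_, ?_⟩
    · apply BraidAux.mem_commutator_of_exp hn
      rw [map_mul, map_zpow]
      have h0 : BraidAux.expHom n (BraidAux.xgen n N0) = Multiplicative.ofAdd 1 :=
        BraidAux.expHom_sigma _
      rw [h0, ← ofAdd_zsmul]
      have h1 : Multiplicative.ofAdd ((-k) • (1:ℤ)) = Multiplicative.ofAdd (-k) := by
        norm_num
      rw [h1]
      have h2 : BraidAux.expHom n g = Multiplicative.ofAdd k := by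
        rw [hk, ofAdd_toAdd]
      rw [h2, ← ofAdd_add]
      norm_num
    · rintro ⟨v, i, rfl⟩
      show g * (BraidAux.xgen n N0) ^ (-k) * (BraidAux.xgen n i)
          * (g * (BraidAux.xgen n N0) ^ (-k))⁻¹ = ((τ (E i) : BraidGroup n))
      have hcomm : Commute ((BraidAux.xgen n N0) ^ (-k)) (BraidAux.xgen n i) :=
        (BraidAux.xgen_commute N0 i).zpow_left (-k)
      have step1 : g * (BraidAux.xgen n N0) ^ (-k) * BraidAux.xgen n i
            * (g * (BraidAux.xgen n N0) ^ (-k))⁻¹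
          = g * ((BraidAux.xgen n N0) ^ (-k) * BraidAux.xgen n i
            * ((BraidAux.xgen n N0) ^ (-k))⁻¹) * g⁻¹ := by
        group
      rw [step1, hcomm.eq, mul_assoc (BraidAux.xgen n i) _ _, mul_inv_cancel, mul_one, hg i]
      have step4 : τ (E i) = E (π i) := by
        rw [hπ]
        simp
      rw [step4]
      rfl
end

section
/- Let n ≥ 4 and let N = ⌊n/2⌋. The set Y_n = {σ_1 σ_3⁻¹, σ_1 σ_5⁻¹, …, σ_1 σ_{2N-1}⁻¹} is contained in the commutator subgroup B_n' and is a totally symmetric subset of B_n': its elements commute pairwise, and every permutation of Y_n is achieved by conjugation by an element of B_n'. -/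
namespace Stmt11Aux

open Equiv
open scoped commutatorElement

variable {n : ℕ}

/-- The first braid relation in the braid group. -/
lemma braid_one (i j : Fin (n - 1)) (h : (i : ℕ) + 1 = (j : ℕ)) :
    σ i * σ j * σ i = σ j * σ i * σ j := by
  have h1 : (PresentedGroup.mk (braidRels n))
      (FreeGroup.of i * FreeGroup.of j * FreeGroup.of i *
        (FreeGroup.of j * FreeGroup.of i * FreeGroup.of j)⁻¹) = 1 :=
    (QuotientGroup.eq_one_iff _).2 (Subgroup.subset_normalClosure (Or.inl ⟨i, j, h, rfl⟩))
  simp only [map_mul, map_inv] at h1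
  exact mul_inv_eq_one.mp h1

/-- The second braid relation in the braid group. -/
lemma braid_two (i j : Fin (n - 1)) (h : (i : ℕ) + 2 ≤ (j : ℕ)) :
    Commute (σ i) (σ j) := by
  have h1 : (PresentedGroup.mk (braidRels n))
      (FreeGroup.of i * FreeGroup.of j * (FreeGroup.of j * FreeGroup.of i)⁻¹) = 1 :=
    (QuotientGroup.eq_one_iff _).2 (Subgroup.subset_normalClosure (Or.inr ⟨i, j, h, rfl⟩))
  simp only [map_mul, map_inv] at h1
  exact mul_inv_eq_one.mp h1

lemma commute_far (i j : Fin (n - 1)) (h : (i : ℕ) + 2 ≤ (j : ℕ) ∨ (j : ℕ) + 2 ≤ (i : ℕ)) :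
    Commute (σ i) (σ j) := by
  rcases h with h | h
  · exact braid_two i j h
  · exact (braid_two j i h).symm

/-- Every generator is conjugate to the first generator. -/
lemma exists_conj (h0 : 0 < n - 1) :
    ∀ k (hk : k < n - 1), ∃ c : BraidGroup n, σ ⟨k, hk⟩ = c * σ ⟨0, h0⟩ * c⁻¹ := by
  intro k
  induction k with
  | zero => exact fun hk => ⟨1, by rw [one_mul, inv_one, mul_one]⟩
  | succ k ih =>
    intro hk
    have hk' : k < n - 1 := by omega
    obtain ⟨c, hc⟩ := ih hk'
    have hb := braid_one (n := n) ⟨k, hk'⟩ ⟨k + 1, hk⟩ rfl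
    set A := σ (n := n) ⟨k, hk'⟩ with hA
    set B := σ (n := n) ⟨k + 1, hk⟩ with hB
    refine ⟨A * B * c, ?_⟩
    symm
    calc (A * B * c) * σ ⟨0, h0⟩ * (A * B * c)⁻¹
        = A * B * (c * σ ⟨0, h0⟩ * c⁻¹) * (A * B)⁻¹ := by group
      _ = A * B * A * (A * B)⁻¹ := by rw [← hc]
      _ = B * A * B * (A * B)⁻¹ := by rw [hb]
      _ = B := by group

lemma conj_mul_inv_mem {G : Type*} [Group G] {x y c : G} (h : x = c * y * c⁻¹) :
    x * y⁻¹ ∈ commutator G := by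
  have hx : x * y⁻¹ = ⁅c, y⁆ := by rw [h]; group
  rw [hx, commutator_def]
  exact Subgroup.commutator_mem_commutator (Subgroup.mem_top c) (Subgroup.mem_top y)

lemma inv_mul_conj_mem {G : Type*} [Group G] {x y c : G} (h : x = c * y * c⁻¹) :
    y⁻¹ * x ∈ commutator G := by
  have hx : y⁻¹ * x = ⁅y⁻¹, c⁆ := by rw [h]; group
  rw [hx, commutator_def]
  exact Subgroup.commutator_mem_commutator (Subgroup.mem_top _) (Subgroup.mem_top c)

/-! ### A representation into the symmetric group, used for injectivity -/

def embed (i : Fin (n - 1)) : Fin n := ⟨i.1, by have := i.2; omega⟩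

def embedS (i : Fin (n - 1)) : Fin n := ⟨i.1 + 1, by have := i.2; omega⟩

def perms : Fin (n - 1) → Equiv.Perm (Fin n) := fun i => Equiv.swap (embed i) (embedS i)

lemma swap_braid {α : Type*} [DecidableEq α] (p q r : α)
    (hpq : p ≠ q) (hqr : q ≠ r) (hpr : p ≠ r) :
    Equiv.swap p q * Equiv.swap q r * Equiv.swap p q
      = Equiv.swap q r * Equiv.swap p q * Equiv.swap q r := by
  have e1 : Equiv.swap p q * Equiv.swap q r * Equiv.swap p q = Equiv.swap p r := by
    rw [swap_comm p q, swap_comm q r]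
    exact Equiv.swap_mul_swap_mul_swap hqr.symm hpr.symm
  have e2 : Equiv.swap q r * Equiv.swap p q * Equiv.swap q r = Equiv.swap r p :=
    Equiv.swap_mul_swap_mul_swap hpq hpr
  rw [e1, e2, swap_comm]

lemma swap_commute {α : Type*} [DecidableEq α] (a b c d : α)
    (h1 : c ≠ a) (h2 : c ≠ b) (h3 : d ≠ a) (h4 : d ≠ b) :
    Commute (Equiv.swap a b) (Equiv.swap c d) := by
  have h := Equiv.swap_apply_apply (Equiv.swap a b) c d
  rw [swap_apply_of_ne_of_ne h1 h2, swap_apply_of_ne_of_ne h3 h4] at h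
  exact mul_inv_eq_iff_eq_mul.mp h.symm

lemma relsHold : ∀ r ∈ braidRels n, FreeGroup.lift (perms (n := n)) r = 1 := by
  rintro r (⟨i, j, hij, rfl⟩ | ⟨i, j, hij, rfl⟩) <;>
    simp only [map_mul, map_inv, FreeGroup.lift_apply_of] <;> rw [mul_inv_eq_one]
  · obtain ⟨i, hi⟩ := i
    obtain ⟨j, hj⟩ := j
    simp only at hij
    subst hij
    have hq : embedS (n := n) ⟨i, hi⟩ = embed ⟨i + 1, hj⟩ := rfl
    show Equiv.swap (embed ⟨i, hi⟩) (embedS ⟨i, hi⟩)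
        * Equiv.swap (embed ⟨i + 1, hj⟩) (embedS ⟨i + 1, hj⟩)
        * Equiv.swap (embed ⟨i, hi⟩) (embedS ⟨i, hi⟩) = _
    rw [← hq]
    exact swap_braid _ _ _
      (by simp only [embed, embedS, ne_eq, Fin.mk.injEq]; omega)
      (by simp only [embed, embedS, ne_eq, Fin.mk.injEq]; omega)
      (by simp only [embed, embedS, ne_eq, Fin.mk.injEq]; omega)
  · exact (swap_commute _ _ _ _
      (by simp only [embed, embedS, ne_eq, Fin.mk.injEq]; omega)
      (by simp only [embed, embedS, ne_eq, Fin.mk.injEq]; omega)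
      (by simp only [embed, embedS, ne_eq, Fin.mk.injEq]; omega)
      (by simp only [embed, embedS, ne_eq, Fin.mk.injEq]; omega)).symm

noncomputable def rep : BraidGroup n →* Equiv.Perm (Fin n) :=
  PresentedGroup.toGroup relsHold

lemma rep_σ (i : Fin (n - 1)) : rep (σ i) = perms i :=
  PresentedGroup.toGroup.of relsHold

lemma σ_ne (i j : Fin (n - 1)) (h : (i : ℕ) + 2 ≤ (j : ℕ)) : σ i ≠ σ j := by
  intro he
  have h2 : perms (n := n) i = perms j := by
    have h3 := congrArg (rep (n := n)) he
    rwa [rep_σ, rep_σ] at h3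
  have h4 := DFunLike.congr_fun h2 (embed i)
  unfold perms at h4
  rw [swap_apply_left, swap_apply_of_ne_of_ne
      (by simp only [embed, ne_eq, Fin.mk.injEq]; omega)
      (by simp only [embed, embedS, ne_eq, Fin.mk.injEq]; omega)] at h4
  simp only [embed, embedS, Fin.mk.injEq] at h4
  omega

/-! ### The elements of `Y_n` -/

def yy (n : ℕ) : Fin (n / 2 - 1) → BraidGroup n := fun i =>
  σ ⟨0, by have := i.2; omega⟩ * (σ ⟨2 * (i.1 + 1), by have := i.2; omega⟩)⁻¹

lemma yy_injective : Function.Injective (yy n) := by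
  intro i j hij
  have h2 : σ (n := n) ⟨2 * (i.1 + 1), by have := i.2; omega⟩
      = σ ⟨2 * (j.1 + 1), by have := j.2; omega⟩ := by
    have := mul_left_cancel hij
    exact inv_injective this
  by_contra hne
  have hne' : i.1 ≠ j.1 := fun h => hne (Fin.ext h)
  rcases Nat.lt_or_ge i.1 j.1 with h | h
  · exact σ_ne _ _ (show 2 * (i.1 + 1) + 2 ≤ 2 * (j.1 + 1) by omega) h2
  · exact σ_ne _ _ (show 2 * (j.1 + 1) + 2 ≤ 2 * (i.1 + 1) by omega) h2.symm

lemma yy_mem_commutator (i : Fin (n / 2 - 1)) : yy n i ∈ commutator (BraidGroup n) := by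
  have h0 : 0 < n - 1 := by have := i.2; omega
  obtain ⟨c, hc⟩ := exists_conj h0 (2 * (i.1 + 1)) (by have := i.2; omega)
  refine conj_mul_inv_mem (c := c⁻¹) ?_
  rw [inv_inv]
  rw [hc]
  group

lemma commute_yy (i j : Fin (n / 2 - 1)) : Commute (yy n i) (yy n j) := by
  rcases eq_or_ne i j with rfl | hne
  · exact Commute.refl _
  have hne' : i.1 ≠ j.1 := fun h => hne (Fin.ext h)
  have h0i : Commute (σ (n := n) ⟨0, by have := i.2; omega⟩)
      (σ ⟨2 * (i.1 + 1), by have := i.2; omega⟩) :=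
    braid_two _ _ (show 0 + 2 ≤ 2 * (i.1 + 1) by omega)
  have h0j : Commute (σ (n := n) ⟨0, by have := i.2; omega⟩)
      (σ ⟨2 * (j.1 + 1), by have := j.2; omega⟩) :=
    braid_two _ _ (show 0 + 2 ≤ 2 * (j.1 + 1) by omega)
  have hij : Commute (σ (n := n) ⟨2 * (i.1 + 1), by have := i.2; omega⟩)
      (σ ⟨2 * (j.1 + 1), by have := j.2; omega⟩) := by
    refine commute_far _ _ ?_
    rcases Nat.lt_or_ge i.1 j.1 with h | h
    · exact Or.inl (show 2 * (i.1 + 1) + 2 ≤ 2 * (j.1 + 1) by omega)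
    · exact Or.inr (show 2 * (j.1 + 1) + 2 ≤ 2 * (i.1 + 1) by omega)
  exact ((Commute.refl _).mul_right h0j.inv_right).mul_left
    ((h0i.symm.inv_left).mul_right (hij.inv_left.inv_right))

/-! ### The key semiconjugation computation -/

lemma semiconj_block {G : Type*} [Group G] (a c d : G)
    (h1 : a * c * a = c * a * c) (h2 : c * d * c = d * c * d) (h3 : a * d = d * a) :
    SemiconjBy (c * a * d * c) a d ∧ SemiconjBy (c * a * d * c) d a := by
  have h3x : ∀ x, a * (d * x) = d * (a * x) := fun x => by
    rw [← mul_assoc, h3, mul_assoc]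
  have h1' : a * (c * a) = c * (a * c) := by
    rw [← mul_assoc, h1, mul_assoc]
  have h2' : d * (c * d) = c * (d * c) := by
    rw [← mul_assoc, ← h2, mul_assoc]
  have h1x : ∀ x, a * (c * (a * x)) = c * (a * (c * x)) := fun x => by
    rw [← mul_assoc, ← mul_assoc, h1, mul_assoc, mul_assoc]
  have h2x : ∀ x, c * (d * (c * x)) = d * (c * (d * x)) := fun x => by
    rw [← mul_assoc, ← mul_assoc, h2, mul_assoc, mul_assoc]
  constructor
  · show c * a * d * c * a = d * (c * a * d * c)
    simp only [mul_assoc]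
    rw [h3x, h1', h2x, ← h3x]
  · show c * a * d * c * d = a * (c * a * d * c)
    simp only [mul_assoc]
    rw [h2', ← h1x]

end Stmt11Aux

namespace Stmt11Aux

open Equiv

variable {n : ℕ}

lemma adj_swap (k : ℕ) (hk1 : k + 1 < n / 2 - 1) :
    ∃ g ∈ commutator (BraidGroup n), ∀ j : Fin (n / 2 - 1),
      SemiconjBy g (yy n j)
        (yy n (Equiv.swap (⟨k, by omega⟩ : Fin (n / 2 - 1)) ⟨k + 1, hk1⟩ j)) := by
  have h0 : 0 < n - 1 := by omega
  have hAi : 2 * (k + 1) < n - 1 := by omega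
  have hCi : 2 * (k + 1) + 1 < n - 1 := by omega
  have hDi : 2 * (k + 1 + 1) < n - 1 := by omega
  set s0 : BraidGroup n := σ ⟨0, h0⟩ with hs0def
  set A : BraidGroup n := σ ⟨2 * (k + 1), hAi⟩ with hAdef
  set C : BraidGroup n := σ ⟨2 * (k + 1) + 1, hCi⟩ with hCdef
  set D : BraidGroup n := σ ⟨2 * (k + 1 + 1), hDi⟩ with hDdef
  have h1 : A * C * A = C * A * C := braid_one _ _ rfl
  have h2 : C * D * C = D * C * D :=
    braid_one _ _ (show 2 * (k + 1) + 1 + 1 = 2 * (k + 1 + 1) by omega)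
  have h3 : A * D = D * A := braid_two _ _ (show 2 * (k + 1) + 2 ≤ 2 * (k + 1 + 1) by omega)
  obtain ⟨hGA, hGD⟩ := semiconj_block A C D h1 h2 h3
  have cs0A : Commute s0 A := braid_two _ _ (show 0 + 2 ≤ 2 * (k + 1) by omega)
  have cs0C : Commute s0 C := braid_two _ _ (show 0 + 2 ≤ 2 * (k + 1) + 1 by omega)
  have cs0D : Commute s0 D := braid_two _ _ (show 0 + 2 ≤ 2 * (k + 1 + 1) by omega)
  have hs0g : Commute s0 (C * A * D * C) :=
    ((cs0C.mul_right cs0A).mul_right cs0D).mul_right cs0C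
  obtain ⟨cA, hcA⟩ := exists_conj h0 (2 * (k + 1)) hAi
  obtain ⟨cC, hcC⟩ := exists_conj h0 (2 * (k + 1) + 1) hCi
  obtain ⟨cD, hcD⟩ := exists_conj h0 (2 * (k + 1 + 1)) hDi
  have m1 : s0⁻¹ * C ∈ commutator (BraidGroup n) := inv_mul_conj_mem hcC
  have m2 : s0⁻¹ * A ∈ commutator (BraidGroup n) := inv_mul_conj_mem hcA
  have m3 : s0⁻¹ * D ∈ commutator (BraidGroup n) := inv_mul_conj_mem hcD
  have hC' : ∀ x : BraidGroup n, s0⁻¹ * (C * x) = C * (s0⁻¹ * x) := fun x => by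
    rw [← mul_assoc, (cs0C.inv_left).eq, mul_assoc]
  have hA' : ∀ x : BraidGroup n, s0⁻¹ * (A * x) = A * (s0⁻¹ * x) := fun x => by
    rw [← mul_assoc, (cs0A.inv_left).eq, mul_assoc]
  have hD' : ∀ x : BraidGroup n, s0⁻¹ * (D * x) = D * (s0⁻¹ * x) := fun x => by
    rw [← mul_assoc, (cs0D.inv_left).eq, mul_assoc]
  have heq : (s0⁻¹ * C) * ((s0⁻¹ * A) * ((s0⁻¹ * D) * (s0⁻¹ * C)))
      = s0⁻¹ * (s0⁻¹ * (s0⁻¹ * (s0⁻¹ * (C * A * D * C)))) := by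
    simp only [mul_assoc]
    rw [← hC', ← hA', ← hC', ← hD', ← hA', ← hC']
  have hs0y : ∀ l : Fin (n / 2 - 1), SemiconjBy s0⁻¹ (yy n l) (yy n l) := by
    intro l
    refine Commute.inv_left ?_
    exact (Commute.refl s0).mul_right
      (braid_two _ _ (show 0 + 2 ≤ 2 * (l.1 + 1) by omega)).inv_right
  refine ⟨(s0⁻¹ * C) * ((s0⁻¹ * A) * ((s0⁻¹ * D) * (s0⁻¹ * C))),
    mul_mem m1 (mul_mem m2 (mul_mem m3 m1)), ?_⟩
  intro j
  rw [heq]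
  have hsem_g : SemiconjBy (C * A * D * C) (yy n j)
      (yy n (Equiv.swap (⟨k, by omega⟩ : Fin (n / 2 - 1)) ⟨k + 1, hk1⟩ j)) := by
    by_cases hjk : j = (⟨k, by omega⟩ : Fin (n / 2 - 1))
    · rw [hjk, swap_apply_left]
      exact SemiconjBy.mul_right hs0g.symm hGA.inv_right
    · by_cases hjk1 : j = (⟨k + 1, hk1⟩ : Fin (n / 2 - 1))
      · rw [hjk1, swap_apply_right]
        exact SemiconjBy.mul_right hs0g.symm hGD.inv_right
      · rw [swap_apply_of_ne_of_ne hjk hjk1]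
        have hj1 : j.1 ≠ k := fun h => hjk (Fin.ext h)
        have hj2 : j.1 ≠ k + 1 := fun h => hjk1 (Fin.ext h)
        have hfar : ∀ (v : ℕ) (hv : v < n - 1), 2 * (k + 1) ≤ v → v ≤ 2 * (k + 1 + 1) →
            Commute (σ ⟨v, hv⟩) (σ (n := n) ⟨2 * (j.1 + 1), by have := j.2; omega⟩) := by
          intro v hv hv1 hv2
          refine commute_far _ _ ?_
          rcases Nat.lt_or_ge j.1 k with h | h
          · exact Or.inr (show 2 * (j.1 + 1) + 2 ≤ v by omega)
          · exact Or.inl (show v + 2 ≤ 2 * (j.1 + 1) by omega)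
        have cCy : Commute C (yy n j) :=
          cs0C.symm.mul_right (hfar _ hCi (by omega) (by omega)).inv_right
        have cAy : Commute A (yy n j) :=
          cs0A.symm.mul_right (hfar _ hAi (by omega) (by omega)).inv_right
        have cDy : Commute D (yy n j) :=
          cs0D.symm.mul_right (hfar _ hDi (by omega) (by omega)).inv_right
        exact ((cCy.mul_left cAy).mul_left cDy).mul_left cCy
  exact (hs0y _).mul_left ((hs0y _).mul_left ((hs0y _).mul_left ((hs0y _).mul_left hsem_g)))

end Stmt11Aux

namespace Stmt11Aux

open Equiv

variable {n : ℕ}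

lemma realize (q : Equiv.Perm (Fin (n / 2 - 1))) :
    ∃ g ∈ commutator (BraidGroup n), ∀ j, SemiconjBy g (yy n j) (yy n (q j)) := by
  classical
  let P : Equiv.Perm (Fin (n / 2 - 1)) → Prop := fun q =>
    ∃ g ∈ commutator (BraidGroup n), ∀ j, SemiconjBy g (yy n j) (yy n (q j))
  show P q
  have hP1 : P 1 := ⟨1, one_mem _, fun j => by
    rw [Equiv.Perm.one_apply]; exact SemiconjBy.one_left _⟩
  have hPmul : ∀ q r, P q → P r → P (q * r) := by
    rintro q r ⟨g1, hg1, hs1⟩ ⟨g2, hg2, hs2⟩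
    refine ⟨g1 * g2, mul_mem hg1 hg2, fun j => ?_⟩
    rw [Equiv.Perm.mul_apply]
    exact SemiconjBy.mul_left (hs1 (r j)) (hs2 j)
  have hPinv : ∀ q, P q → P q⁻¹ := by
    rintro q ⟨g, hg, hs⟩
    refine ⟨g⁻¹, inv_mem hg, fun j => ?_⟩
    have h := hs (q⁻¹ j)
    rw [Equiv.Perm.coe_inv, Equiv.apply_symm_apply] at h
    exact h.inv_symm_left
  have hPadj : ∀ (k : ℕ) (hk : k + 1 < n / 2 - 1),
      P (Equiv.swap ⟨k, by omega⟩ ⟨k + 1, hk⟩) := fun k hk => adj_swap k hk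
  have hPswap : ∀ a b : Fin (n / 2 - 1), a.1 < b.1 → P (Equiv.swap a b) := by
    suffices h : ∀ d (a b : Fin (n / 2 - 1)), b.1 - a.1 = d + 1 → a.1 < b.1 →
        P (Equiv.swap a b) by
      intro a b hab
      exact h (b.1 - a.1 - 1) a b (by omega) hab
    intro d
    induction d with
    | zero =>
      intro a b hd hab
      have hk : a.1 + 1 < n / 2 - 1 := by have := b.2; omega
      rw [show b = ⟨a.1 + 1, hk⟩ from Fin.ext (show b.1 = a.1 + 1 by omega)]
      exact hPadj a.1 hk
    | succ d ih =>
      intro a b hd hab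
      obtain ⟨kk, hbk⟩ : ∃ kk, b.1 = kk + 1 := ⟨b.1 - 1, by omega⟩
      have hb2 := b.2
      have hkk : kk + 1 < n / 2 - 1 := by omega
      rw [show b = ⟨kk + 1, hkk⟩ from Fin.ext (show b.1 = kk + 1 by omega)]
      have h1 : P (Equiv.swap (⟨kk, by omega⟩ : Fin (n / 2 - 1)) ⟨kk + 1, hkk⟩) :=
        hPadj kk hkk
      have h2 : P (Equiv.swap a (⟨kk, by omega⟩ : Fin (n / 2 - 1))) :=
        ih a ⟨kk, by omega⟩ (show kk - a.1 = d + 1 by omega) (show a.1 < kk by omega)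
      have hxy : a ≠ (⟨kk, by omega⟩ : Fin (n / 2 - 1)) :=
        fun h => (show ¬ a.1 = kk by omega) (congrArg Fin.val h)
      have hxz : a ≠ (⟨kk + 1, hkk⟩ : Fin (n / 2 - 1)) :=
        fun h => (show ¬ a.1 = kk + 1 by omega) (congrArg Fin.val h)
      rw [Equiv.swap_comm a _, ← Equiv.swap_mul_swap_mul_swap hxy hxz]
      exact hPmul _ _ (hPmul _ _ h1 h2) h1
  have hq : q ∈ Subgroup.closure {s : Equiv.Perm (Fin (n / 2 - 1)) | s.IsSwap} := by
    rw [Equiv.Perm.closure_isSwap]; trivial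
  refine Subgroup.closure_induction (p := fun x _ => P x) ?_ hP1
    (fun x y _ _ hx hy => hPmul x y hx hy) (fun x _ hx => hPinv x hx) hq
  rintro s ⟨x, y, hxy, rfl⟩
  have hvne : x.1 ≠ y.1 := fun h => hxy (Fin.ext h)
  rcases Nat.lt_or_ge x.1 y.1 with h | h
  · exact hPswap x y h
  · rw [Equiv.swap_comm]
    exact hPswap y x (by omega)

end Stmt11Aux

/-- For `n ≥ 4`, the set `Y_n = {σ_1 σ_3⁻¹, σ_1 σ_5⁻¹, …, σ_1 σ_{2⌊n/2⌋-1}⁻¹}`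
lies in `B_n'` and is a totally symmetric subset of `B_n'`. -/
theorem stmt11 (n : ℕ) (hn : 4 ≤ n) :
    (∀ i : Fin (n / 2 - 1),
      σ (n := n) ⟨0, by omega⟩ * (σ (n := n) ⟨2 * (i.1 + 1), by have := i.2; omega⟩)⁻¹ ∈
        commutator (BraidGroup n)) ∧
    IsTotallySymmetricWrt
      (Set.range fun i : Fin (n / 2 - 1) =>
        σ (n := n) ⟨0, by omega⟩ * (σ (n := n) ⟨2 * (i.1 + 1), by have := i.2; omega⟩)⁻¹)
      (commutator (BraidGroup n)) := by
  classical
  refine ⟨fun i => Stmt11Aux.yy_mem_commutator i, ?_, ?_⟩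
  · rintro x ⟨i, rfl⟩ y ⟨j, rfl⟩
    exact Stmt11Aux.commute_yy i j
  · intro τ
    let e : Fin (n / 2 - 1) ≃ Set.range (Stmt11Aux.yy n) :=
      Equiv.ofInjective (Stmt11Aux.yy n) Stmt11Aux.yy_injective
    let p : Equiv.Perm (Fin (n / 2 - 1)) := (e.trans τ).trans e.symm
    obtain ⟨g, hg, hsc⟩ := Stmt11Aux.realize (n := n) p
    refine ⟨g, hg, ?_⟩
    intro x
    have hj := hsc (e.symm x)
    have h1 : Stmt11Aux.yy n (e.symm x) = (x : BraidGroup n) :=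
      Equiv.apply_ofInjective_symm Stmt11Aux.yy_injective x
    have h2 : Stmt11Aux.yy n (p (e.symm x)) = ((τ x : Set.range (Stmt11Aux.yy n)) : BraidGroup n) := by
      show Stmt11Aux.yy n (e.symm (τ (e (e.symm x)))) = _
      refine (congrArg (fun z => Stmt11Aux.yy n (e.symm (τ z))) (e.apply_symm_apply x)).trans ?_
      exact Equiv.apply_ofInjective_symm Stmt11Aux.yy_injective (τ x)
    rw [h1, h2] at hj
    exact mul_inv_eq_iff_eq_mul.mpr hj
end

section
/- Let G be a group and let X = {x_1, …, x_m} be a totally symmetric subset of G with m distinct elements such that the homomorphism ℤ^m → G sending the i-th standard basis vector to x_i is injective (so the subgroup ⟨X⟩ generated by X is free abelian of rank m). Let Y be a totally symmetric subset of G with exactly m elements such that Y ⊆ ⟨X⟩ and such that Stab_G(Y) ⊆ Stab_G(X), where Stab_G(S) denotes the stabilizer of the subset S under the conjugation action of G on subsets of G. Then there exist integers k and ℓ such that Y = {x_1^k (x_1^*)^ℓ, …, x_m^k (x_m^*)^ℓ}, where x_i^* denotes the product of the x_j with j ≠ i. -/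
open Finset in
private theorem msNcpCongr {M : Type*} [Monoid M] {s t : Multiset M} (h : s = t) (hs) (ht) :
    s.noncommProd hs = t.noncommProd ht := by subst h; rfl

private theorem ncpReindex {M : Type*} [Monoid M] {n : ℕ} (f : Fin n → M)
    (π : Equiv.Perm (Fin n)) (c1) (c2) :
    Finset.univ.noncommProd (fun i => f (π i)) c1 = Finset.univ.noncommProd f c2 := by
  show Multiset.noncommProd _ _ = Multiset.noncommProd _ _
  apply msNcpCongr
  calc Finset.univ.val.map (fun i => f (π i)) = (Finset.univ.val.map ⇑π).map f := by
        rw [Multiset.map_map]; rfl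
    _ = Finset.univ.val.map f := by rw [Multiset.map_univ_val_equiv]

private theorem ncpZpow {G : Type*} [Group G] {α : Type*} (s : Finset α) (f : α → G) (n : ℤ) :
    ∀ (c1 : (s : Set α).Pairwise (Function.onFun Commute (fun a => f a ^ n)))
      (c2 : (s : Set α).Pairwise (Function.onFun Commute f)),
    s.noncommProd (fun a => f a ^ n) c1 = (s.noncommProd f c2) ^ n := by
  induction s using Finset.cons_induction with
  | empty => intro c1 c2; simp
  | cons a s ha ih =>
      intro c1 c2
      rw [Finset.noncommProd_cons, Finset.noncommProd_cons, ih _ _]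
      refine (Commute.mul_zpow ?_ n).symm
      refine Finset.noncommProd_commute _ _ _ _ fun b hb => ?_
      exact c2 (by simp) (by simp [hb]) (fun h => ha (h ▸ hb))

private theorem ncpSplit {G : Type*} [Group G] {n : ℕ} (f : Fin n → G) (i : Fin n) (c1) (c2) :
    Finset.univ.noncommProd f c1 = f i * (Finset.univ.erase i).noncommProd f c2 := by
  have h := Finset.noncommProd_congr (s₁ := Finset.univ)
    (s₂ := insert i (Finset.univ.erase i)) (f := f) (g := f)
    (Finset.insert_erase (Finset.mem_univ i)).symm (fun _ _ => rfl) c1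
  exact h.trans (Finset.noncommProd_insert_of_notMem _ _ _ _ (Finset.notMem_erase _ _))


private theorem comb {m : ℕ} (hm : 2 ≤ m) (w : Fin m → Fin m → ℤ)
    (hw : Function.Injective w)
    (H : ∀ τ : Equiv.Perm (Fin m), ∃ π : Equiv.Perm (Fin m), ∀ j, w (τ j) = w j ∘ π) :
    ∃ k l : ℤ, ∃ p : Equiv.Perm (Fin m), ∀ j i, w j i = if i = p j then k else l := by
  classical
  set c : Fin m → Fin m → ℤ := fun i j => w j i with hc
  set M : Multiset (Fin m → ℤ) := Finset.univ.val.map c with hMdef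
  have hMcard : Multiset.card M = m := by simp [hMdef]
  have Minv : ∀ τ : Equiv.Perm (Fin m), M.map (· ∘ ⇑τ) = M := by
    intro τ
    obtain ⟨π, hπ⟩ := H τ
    have hcol : ∀ i : Fin m, c i ∘ ⇑τ = c (π i) := by
      intro i; funext j
      show w (τ j) i = w j (π i)
      exact congrFun (hπ j) i
    calc M.map (· ∘ ⇑τ) = Finset.univ.val.map (fun i => c i ∘ ⇑τ) := by
          rw [hMdef, Multiset.map_map]; rfl
      _ = Finset.univ.val.map (fun i => c (π i)) := by simp only [hcol]
      _ = (Finset.univ.val.map ⇑π).map c := by rw [Multiset.map_map]; rfl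
      _ = M := by rw [Multiset.map_univ_val_equiv]
  have hmemM : ∀ u ∈ M, ∀ τ : Equiv.Perm (Fin m), u ∘ ⇑τ ∈ M := by
    intro u hu τ
    rw [← Minv τ]
    exact Multiset.mem_map_of_mem _ hu
  have hnc : ∃ i a b, c i a ≠ c i b := by
    by_contra h
    push_neg at h
    have h2 : (⟨0, by omega⟩ : Fin m) ≠ ⟨1, by omega⟩ := by simp
    exact h2 (hw (funext fun i => h i _ _))
  obtain ⟨i0, a0, b0, hne⟩ := hnc
  set u : Fin m → ℤ := c i0 with hu
  set k : ℤ := u a0 with hk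
  have huM : u ∈ M := Multiset.mem_map_of_mem c (Finset.mem_univ_val _)
  have hb0 : u b0 ≠ k := fun h => hne h.symm
  have hk0 : u a0 = k := rfl
  have hAnb : ∀ {t : Fin m}, u t = k → t ≠ b0 := fun h hh => hb0 (hh ▸ h)
  have hBna : ∀ {t : Fin m}, u t ≠ k → t ≠ a0 := fun h hh => h (hh ▸ hk0)
  have hab : a0 ≠ b0 := hAnb hk0
  have hshape : ∃ s : Fin m, ∃ kk ll : ℤ, kk ≠ ll ∧ u = fun j => if j = s then kk else ll := by
    set L : Fin m → (Fin m → ℤ) := fun t =>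
      if u t = k then (if t = a0 then u else u ∘ ⇑(Equiv.swap t b0))
      else u ∘ ⇑(Equiv.swap a0 t) with hL
    have hL1 : L a0 = u := by simp [hL, hk0]
    have hL2 : ∀ t, u t = k → t ≠ a0 → L t = u ∘ ⇑(Equiv.swap t b0) := by
      intro t h1 h2; simp [hL, h1, h2]
    have hL3 : ∀ t, u t ≠ k → L t = u ∘ ⇑(Equiv.swap a0 t) := by
      intro t h1; simp [hL, h1]
    have hLM : ∀ t, L t ∈ M := by
      intro t
      by_cases h1 : u t = k
      · by_cases h2 : t = a0
        · rw [h2, hL1]; exact huM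
        · rw [hL2 t h1 h2]; exact hmemM u huM _
      · rw [hL3 t h1]; exact hmemM u huM _
    have hLinj : Function.Injective L := by
      intro t t' h
      by_contra hne'
      by_cases h1 : u t = k <;> by_cases h2 : u t' = k
      · by_cases h3 : t = a0 <;> by_cases h4 : t' = a0
        · exact hne' (h3.trans h4.symm)
        · rw [h3, hL1, hL2 t' h2 h4] at h
          have := congrFun h t'
          simp only [Function.comp_apply, Equiv.swap_apply_left] at this
          exact hb0 (this ▸ h2)
        · rw [h4, hL1, hL2 t h1 h3] at h
          have := congrFun h.symm t
          simp only [Function.comp_apply, Equiv.swap_apply_left] at this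
          exact hb0 (this ▸ h1)
        · rw [hL2 t h1 h3, hL2 t' h2 h4] at h
          have := congrFun h t
          simp only [Function.comp_apply, Equiv.swap_apply_left,
            Equiv.swap_apply_of_ne_of_ne hne' (hAnb h1)] at this
          exact hb0 (this.symm ▸ h1)
      · by_cases h3 : t = a0
        · rw [h3, hL1, hL3 t' h2] at h
          have := congrFun h a0
          simp only [Function.comp_apply, Equiv.swap_apply_left] at this
          exact h2 (this ▸ hk0)
        · rw [hL2 t h1 h3, hL3 t' h2] at h
          have := congrFun h a0
          simp only [Function.comp_apply, Equiv.swap_apply_left,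
            Equiv.swap_apply_of_ne_of_ne (Ne.symm h3) hab] at this
          exact h2 (this ▸ hk0)
      · by_cases h3 : t' = a0
        · rw [h3, hL1, hL3 t h1] at h
          have := congrFun h.symm a0
          simp only [Function.comp_apply, Equiv.swap_apply_left] at this
          exact h1 (this ▸ hk0)
        · rw [hL2 t' h2 h3, hL3 t h1] at h
          have := congrFun h.symm a0
          simp only [Function.comp_apply, Equiv.swap_apply_left,
            Equiv.swap_apply_of_ne_of_ne (Ne.symm h3) hab] at this
          exact h1 (this ▸ hk0)
      · rw [hL3 t h1, hL3 t' h2] at h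
        have := congrFun h t
        simp only [Function.comp_apply, Equiv.swap_apply_right,
          Equiv.swap_apply_of_ne_of_ne (hBna h1) hne'] at this
        exact h1 (this.symm.trans hk0)
    have hML : M = Finset.univ.val.map L := by
      refine (Multiset.eq_of_le_of_card_le ?_ ?_).symm
      · rw [Multiset.le_iff_subset (Finset.univ.nodup.map hLinj)]
        intro z hz
        obtain ⟨t, _, rfl⟩ := Multiset.mem_map.mp hz
        exact hLM t
      · rw [hMcard, Multiset.card_map]
        simp
    have hMmem : ∀ v ∈ M, ∃ t, L t = v := by
      intro v hv
      obtain ⟨t, _, h⟩ := Multiset.mem_map.mp (hML ▸ hv)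
      exact ⟨t, h⟩
    have hαβ : ∀ a1, u a1 = k → a1 ≠ a0 → ∀ b1, u b1 ≠ k → b1 = b0 := by
      intro a1 ha1 ha1' b1 hb1
      by_contra hb1'
      set σ : Equiv.Perm (Fin m) := Equiv.swap a0 b0 * Equiv.swap a1 b1 with hσ
      have hσa0 : σ a0 = b0 := by
        rw [hσ, Equiv.Perm.mul_apply,
          Equiv.swap_apply_of_ne_of_ne (Ne.symm ha1') (Ne.symm (hBna hb1)),
          Equiv.swap_apply_left]
      have hσa1 : σ a1 = b1 := by
        rw [hσ, Equiv.Perm.mul_apply, Equiv.swap_apply_left,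
          Equiv.swap_apply_of_ne_of_ne (hBna hb1) hb1']
      obtain ⟨t, ht⟩ := hMmem _ (hmemM u huM σ)
      by_cases h1 : u t = k
      · by_cases h3 : t = a0
        · rw [h3, hL1] at ht
          have := congrFun ht a0
          simp only [Function.comp_apply, hσa0] at this
          exact hb0 (this ▸ hk0)
        · rw [hL2 t h1 h3] at ht
          have := congrFun ht a0
          simp only [Function.comp_apply, hσa0,
            Equiv.swap_apply_of_ne_of_ne (Ne.symm h3) hab] at this
          exact hb0 (this ▸ hk0)
      · rw [hL3 t h1] at ht
        have := congrFun ht a1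
        have ha1t : a1 ≠ t := fun hh => h1 (hh ▸ ha1)
        simp only [Function.comp_apply, hσa1,
          Equiv.swap_apply_of_ne_of_ne ha1' ha1t] at this
        exact hb1 (this ▸ ha1)
    by_cases hA2 : ∃ a1, u a1 = k ∧ a1 ≠ a0
    · obtain ⟨a1, ha1, ha1'⟩ := hA2
      refine ⟨b0, u b0, k, hb0, funext fun j => ?_⟩
      by_cases hj : j = b0
      · rw [hj, if_pos rfl]
      · rw [if_neg hj]
        by_contra hjk
        exact hj (hαβ a1 ha1 ha1' j hjk)
    · push_neg at hA2
      have hBconst : ∀ j, j ≠ a0 → u j = u b0 := by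
        intro b1 hb1a
        by_contra hbne
        have hb1k : u b1 ≠ k := fun h => hb1a (hA2 b1 h)
        obtain ⟨t, ht⟩ := hMmem _ (hmemM u huM (Equiv.swap b0 b1))
        by_cases h1 : u t = k
        · have h3 : t = a0 := hA2 t h1
          rw [h3, hL1] at ht
          have := congrFun ht b0
          simp only [Function.comp_apply, Equiv.swap_apply_left] at this
          exact hbne (this.symm)
        · rw [hL3 t h1] at ht
          have := congrFun ht a0
          simp only [Function.comp_apply, Equiv.swap_apply_left,
            Equiv.swap_apply_of_ne_of_ne hab (Ne.symm hb1a)] at this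
          exact h1 (this ▸ hk0)
      refine ⟨a0, k, u b0, fun h => hb0 h.symm, funext fun j => ?_⟩
      by_cases hj : j = a0
      · rw [hj, if_pos rfl]
      · rw [if_neg hj]; exact hBconst j hj
  obtain ⟨s, kk, ll, hkl, hus⟩ := hshape
  set χ : Fin m → Fin m → ℤ := fun t j => if j = t then kk else ll with hχ
  have hχinj : Function.Injective χ := by
    intro t t' h
    by_contra hne'
    have := congrFun h t
    simp only [hχ, if_pos rfl, if_neg hne'] at this
    exact hkl this
  have hχM : ∀ t, χ t ∈ M := by
    intro t
    have heq : u ∘ ⇑(Equiv.swap s t) = χ t := by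
      funext j
      by_cases hj : j = t
      · simp [hχ, hus, hj, Equiv.swap_apply_right]
      · have hjs : Equiv.swap s t j ≠ s := by
          intro hh
          exact hj (Equiv.injective _ (hh.trans (Equiv.swap_apply_right s t).symm))
        simp [hχ, hus, hj, hjs]
    rw [← heq]
    exact hmemM u huM _
  have hMχ : M = Finset.univ.val.map χ := by
    refine (Multiset.eq_of_le_of_card_le ?_ ?_).symm
    · rw [Multiset.le_iff_subset (Finset.univ.nodup.map hχinj)]
      intro z hz
      obtain ⟨t, _, rfl⟩ := Multiset.mem_map.mp hz
      exact hχM t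
    · rw [hMcard, Multiset.card_map]
      simp
  have hnodup : (Finset.univ.val.map c).Nodup := by
    rw [← hMdef, hMχ]
    exact Finset.univ.nodup.map hχinj
  have hcinj : Function.Injective c := fun i i' h =>
    Multiset.inj_on_of_nodup_map hnodup _ (Finset.mem_univ_val _) _ (Finset.mem_univ_val _) h
  have hq : ∀ i, ∃ t, χ t = c i := by
    intro i
    have hmem : c i ∈ M := Multiset.mem_map_of_mem c (Finset.mem_univ_val i)
    rw [hMχ] at hmem
    obtain ⟨t, _, h⟩ := Multiset.mem_map.mp hmem
    exact ⟨t, h⟩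
  choose q hqe using hq
  have hqinj : Function.Injective q := fun i i' h => hcinj (by rw [← hqe, ← hqe, h])
  let qe := Equiv.ofBijective q (Finite.injective_iff_bijective.mp hqinj)
  refine ⟨kk, ll, qe.symm, fun j i => ?_⟩
  have h1 : w j i = χ (q i) j := by rw [hqe]
  rw [h1]
  show (if j = q i then kk else ll) = if i = qe.symm j then kk else ll
  have hiff : (j = q i) ↔ (i = qe.symm j) := by
    rw [Equiv.eq_symm_apply]
    exact ⟨fun h => h.symm, fun h => h.symm⟩
  by_cases hh : j = q i
  · rw [if_pos hh, if_pos (hiff.mp hh)]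
  · rw [if_neg hh, if_neg (fun hh2 => hh (hiff.mpr hh2))]


/-- Classification of robust derived totally symmetric sets: if `X = {x_1, …, x_m}`
is totally symmetric, generates a free abelian group of rank `m` (i.e. the map
`ℤ^m → G` determined by `X` is injective), and `Y` is a totally symmetric set of
cardinality `m` contained in `⟨X⟩` whose (conjugation) stabilizer is contained in
that of `X`, then `Y = X^{k,ℓ}` for some integers `k, ℓ`. -/
theorem stmt13 {G : Type*} [Group G] {m : ℕ} (x : Fin m → G)
    (hinj : Function.Injective x)
    (hX : IsTotallySymmetric (Set.range x))
    (hfree : Function.Injective fun v : Fin m → ℤ =>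
      Finset.univ.noncommProd (fun i => x i ^ v i)
        (fun a _ b _ _ => (hX.1 (x a) ⟨a, rfl⟩ (x b) ⟨b, rfl⟩).zpow_zpow (v a) (v b)))
    (Y : Set G) (hYcard : Y.ncard = m)
    (hYsub : Y ⊆ (Subgroup.closure (Set.range x) : Set G))
    (hY : IsTotallySymmetric Y)
    (hrobust : ∀ g : G,
      (fun a => g * a * g⁻¹) '' Y = Y → (fun a => g * a * g⁻¹) '' Set.range x = Set.range x) :
    ∃ k l : ℤ, Y = Set.range fun i : Fin m =>
      x i ^ k * ((Finset.univ.erase i).noncommProd x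
        (fun a _ b _ _ => hX.1 (x a) ⟨a, rfl⟩ (x b) ⟨b, rfl⟩)) ^ l := by
  classical
  rcases Nat.eq_zero_or_pos m with hm0 | hmpos
  · subst hm0
    refine ⟨0, 0, ?_⟩
    have hx0 : Set.range x = ∅ := Set.range_eq_empty x
    have hY1 : Y ⊆ {1} := by
      intro a ha
      have h2 := hYsub ha
      rw [hx0, Subgroup.closure_empty] at h2
      simpa using h2
    have hYfin : Y.Finite := (Set.finite_singleton 1).subset hY1
    have hYe : Y = ∅ := (Set.ncard_eq_zero hYfin).mp hYcard
    rw [hYe, Set.range_eq_empty]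
  · have hcomm : ∀ a b : Fin m, Commute (x a) (x b) :=
      fun a b => hX.1 (x a) ⟨a, rfl⟩ (x b) ⟨b, rfl⟩
    set φ : (Fin m → ℤ) → G := fun v => Finset.univ.noncommProd (fun i => x i ^ v i)
      (fun a _ b _ _ => (hcomm a b).zpow_zpow _ _) with hφdef
    have hφinj : Function.Injective φ := hfree
    have hsplit : ∀ (i : Fin m) (v : Fin m → ℤ),
        φ v = x i ^ v i * (Finset.univ.erase i).noncommProd (fun j => x j ^ v j)
          (fun a _ b _ _ => (hcomm a b).zpow_zpow _ _) :=
      fun i v => ncpSplit _ i _ _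
    have hφmul : ∀ v v' : Fin m → ℤ, φ (v + v') = φ v * φ v' := by
      intro v v'
      have h1 : φ (v + v') = Finset.univ.noncommProd
          ((fun i => x i ^ v i) * fun i => x i ^ v' i)
          (Finset.noncommProd_mul_distrib_aux
            (fun a _ b _ _ => (hcomm a b).zpow_zpow _ _)
            (fun a _ b _ _ => (hcomm a b).zpow_zpow _ _)
            (fun a _ b _ _ => (hcomm a b).zpow_zpow _ _)) :=
        Finset.noncommProd_congr rfl (fun i _ => zpow_add (x i) (v i) (v' i)) _
      rw [h1, Finset.noncommProd_mul_distrib]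
      all_goals exact fun a _ b _ _ => (hcomm a b).zpow_zpow _ _
    have hφone : φ 0 = 1 := by
      have := Finset.noncommProd_eq_pow_card Finset.univ
        (fun i => x i ^ (0 : Fin m → ℤ) i)
        (fun a _ b _ _ => (hcomm a b).zpow_zpow _ _) 1 (fun i _ => zpow_zero (x i))
      rw [hφdef]; dsimp only; rw [this, one_pow]
    have hφinv : ∀ v : Fin m → ℤ, φ (-v) = (φ v)⁻¹ := by
      intro v
      have h := hφmul v (-v)
      rw [add_neg_cancel, hφone] at h
      exact eq_inv_of_mul_eq_one_right h.symm
    have hφsingle : ∀ (i : Fin m) (n : ℤ), φ (fun j => if j = i then n else 0) = x i ^ n := by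
      intro i n
      rw [hsplit i]
      have h2 : (Finset.univ.erase i).noncommProd
          (fun j => x j ^ (if j = i then n else 0)) (fun a _ b _ _ => (hcomm a b).zpow_zpow _ _)
          = 1 := by
        refine (Finset.noncommProd_eq_pow_card _ _ _ 1 ?_).trans (one_pow _)
        intro j hj
        rw [if_neg (Finset.mem_erase.mp hj).1, zpow_zero]
      rw [h2, if_pos rfl, mul_one]
    have hrangeφ : ∀ g ∈ Subgroup.closure (Set.range x), ∃ v, φ v = g := by
      intro g hg
      induction hg using Subgroup.closure_induction with
      | mem a ha =>
          obtain ⟨i, rfl⟩ := ha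
          exact ⟨fun j => if j = i then 1 else 0, by rw [hφsingle, zpow_one]⟩
      | one => exact ⟨0, hφone⟩
      | mul a b _ _ iha ihb =>
          obtain ⟨v, rfl⟩ := iha
          obtain ⟨v', rfl⟩ := ihb
          exact ⟨v + v', hφmul v v'⟩
      | inv a _ iha =>
          obtain ⟨v, rfl⟩ := iha
          exact ⟨-v, hφinv v⟩
    have hconj : ∀ (g : G) (π : Equiv.Perm (Fin m)), (∀ i, g * x i * g⁻¹ = x (π i)) →
        ∀ v : Fin m → ℤ, g * φ v * g⁻¹ = φ (fun i => v (π.symm i)) := by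
      intro g π hgx v
      have h1 : g * φ v * g⁻¹ = (MulAut.conj g) (φ v) := rfl
      rw [h1, hφdef]
      dsimp only
      refine (Finset.map_noncommProd _ _ _ _).trans ?_
      have h2 : ∀ i ∈ Finset.univ, (MulAut.conj g) (x i ^ v i)
          = (fun j => x j ^ v (π.symm j)) (π i) := by
        intro i _
        dsimp only
        rw [map_zpow, MulAut.conj_apply, hgx i, Equiv.symm_apply_apply]
      exact (Finset.noncommProd_congr rfl h2 _).trans
        (ncpReindex (fun j => x j ^ v (π.symm j)) π _
          (fun a _ b _ _ => (hcomm a b).zpow_zpow _ _))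
    -- enumerate Y
    have hYfin : Y.Finite := Set.finite_of_ncard_ne_zero (by omega)
    have hYfin' : Fintype Y := hYfin.fintype
    have hYc : Fintype.card Y = m := by
      rw [← Nat.card_eq_fintype_card, Nat.card_coe_set_eq, hYcard]
    let e : Fin m ≃ Y := (Fintype.equivFinOfCardEq hYc).symm
    set y : Fin m → G := fun j => (e j : G) with hy
    have hyinj : Function.Injective y := fun j j' h => e.injective (Subtype.ext h)
    have hyr : Set.range y = Y := by
      ext a
      constructor
      · rintro ⟨j, rfl⟩; exact (e j).2
      · intro ha; exact ⟨e.symm ⟨a, ha⟩, by simp [hy]⟩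
    have hw : ∀ j, ∃ v, φ v = y j := fun j => hrangeφ _ (hYsub (hyr ▸ Set.mem_range_self j))
    choose w hwφ using hw
    have hwinj : Function.Injective w := fun j j' h => hyinj (by rw [← hwφ, ← hwφ, h])
    have H : ∀ τ : Equiv.Perm (Fin m), ∃ π : Equiv.Perm (Fin m), ∀ j, w (τ j) = w j ∘ π := by
      intro τ
      set τY : Y ≃ Y := (e.symm.trans τ).trans e with hτY
      obtain ⟨g, hg⟩ := hY.2 τY
      have hgY : (fun a => g * a * g⁻¹) '' Y = Y := by
        apply Set.eq_of_subset_of_subset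
        · rintro _ ⟨a, ha, rfl⟩
          have := hg ⟨a, ha⟩
          dsimp only
          rw [this]
          exact (τY ⟨a, ha⟩).2
        · intro b hb
          refine ⟨(τY.symm ⟨b, hb⟩ : G), (τY.symm ⟨b, hb⟩).2, ?_⟩
          dsimp only
          rw [hg (τY.symm ⟨b, hb⟩), Equiv.apply_symm_apply]
      have hgX := hrobust g hgY
      have hπ0 : ∀ i, ∃ i', g * x i * g⁻¹ = x i' := by
        intro i
        have : g * x i * g⁻¹ ∈ (fun a => g * a * g⁻¹) '' Set.range x :=
          ⟨x i, Set.mem_range_self i, rfl⟩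
        rw [hgX] at this
        obtain ⟨i', hi'⟩ := this
        exact ⟨i', hi'.symm⟩
      choose π0 hπ0e using hπ0
      have hπ0inj : Function.Injective π0 := by
        intro i i' h
        apply hinj
        have := (hπ0e i).trans (h ▸ (hπ0e i').symm)
        exact mul_left_cancel (mul_right_cancel this)
      let π : Equiv.Perm (Fin m) := Equiv.ofBijective π0 (Finite.injective_iff_bijective.mp hπ0inj)
      have hπe : ∀ i, g * x i * g⁻¹ = x (π i) := hπ0e
      refine ⟨π.symm, fun j => hφinj ?_⟩
      have h3 : g * y j * g⁻¹ = y (τ j) := by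
        have := hg (e j)
        rw [hτY] at this
        simpa [hy] using this
      have h4 : g * φ (w j) * g⁻¹ = φ (fun i => w j (π.symm i)) := hconj g π hπe (w j)
      rw [hwφ] at h4
      rw [hwφ (τ j)]
      rw [h3] at h4
      exact h4
    have hcomb : ∃ k l : ℤ, ∃ p : Equiv.Perm (Fin m), ∀ j i, w j i = if i = p j then k else l := by
      rcases lt_or_ge m 2 with hm2 | hm2
      · have hm1 : m = 1 := by omega
        subst hm1
        refine ⟨w 0 0, 0, 1, fun j i => ?_⟩
        have h1 : (1 : Equiv.Perm (Fin 1)) j = j := rfl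
        rw [h1, if_pos (Subsingleton.elim i j), Subsingleton.elim j 0, Subsingleton.elim i 0]
      · exact comb hm2 w hwinj H
    obtain ⟨k, l, p, hkl⟩ := hcomb
    refine ⟨k, l, ?_⟩
    have hφF : ∀ j : Fin m, φ (w j) = x (p j) ^ k * ((Finset.univ.erase (p j)).noncommProd x
        (fun a _ b _ _ => hX.1 (x a) ⟨a, rfl⟩ (x b) ⟨b, rfl⟩)) ^ l := by
      intro j
      rw [hsplit (p j) (w j)]
      have h2 : w j (p j) = k := by rw [hkl, if_pos rfl]
      rw [h2]
      congr 1
      refine (Finset.noncommProd_congr rfl (fun i hi => ?_) ?_).trans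
        (ncpZpow _ x l ?_ ?_)
      · rw [hkl, if_neg (Finset.mem_erase.mp hi).1]
      · exact fun a _ b _ _ => (hcomm a b).zpow_zpow _ _
      · exact fun a _ b _ _ => hcomm a b
    have hYr : Y = Set.range fun j => φ (w j) := by
      rw [← hyr]
      exact congrArg _ (funext fun j => (hwφ j).symm)
    rw [hYr]
    have hFp : (fun j => φ (w j)) = (fun i : Fin m =>
        x i ^ k * ((Finset.univ.erase i).noncommProd x
          (fun a _ b _ _ => hX.1 (x a) ⟨a, rfl⟩ (x b) ⟨b, rfl⟩)) ^ l) ∘ ⇑p :=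
      funext fun j => hφF j
    rw [hFp, Function.Surjective.range_comp p.surjective]
end
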